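/- Let v : ℝ² → ℝ be C¹ on an open neighborhood of [0,1]² and let δ, ε > 0. Then ∫_{[0,1]²} e^{−δx₂/ε}·|v(x)| dx ≤ (ε/δ)·( ∫_{[0,1]²} |v(x)| dx + ∫_{[0,1]²} |∂₂v(x)| dx ). -/

import Mathlib

/-! Along each vertical segment, the fundamental theorem of calculus gives
`|v(x₁, x₂)| ≤ |v(x₁, t)| + ∫₀¹ |∂₂v(x₁, s)| ds` for every `t ∈ [0, 1]`; averaging over `t`
yields the trace inequality `|v(x₁, x₂)| ≤ ∫₀¹ |v(x₁, s)| ds + ∫₀¹ |∂₂v(x₁, s)| ds`.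
Its right-hand side does not depend on `x₂`, so integrating it against `e^{-δx₂/ε}`, whose
integral over `[0, ∞)` is `ε/δ`, and then over `x₁` (Fubini) gives the estimate. -/

open MeasureTheory Set

/-- second partial derivative of a function on `ℝ²` -/
noncomputable def pd2 (u : ℝ × ℝ → ℝ) (x : ℝ × ℝ) : ℝ := fderiv ℝ u x (0, 1)

open Real

lemma setIntegral_exp_neg_mul_le {c : ℝ} (hc : 0 < c) {s : Set ℝ} (hs : s ⊆ Ici 0) :
    ∫ x in s, exp (-c * x) ≤ 1 / c := by
  have hc' : -c < 0 := neg_neg_of_pos hc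
  calc ∫ x in s, exp (-c * x)
      ≤ ∫ x in Ioi 0, exp (-c * x) :=
        setIntegral_mono_set (integrableOn_exp_mul_Ioi hc' 0)
          (.of_forall fun _ => (exp_pos _).le) (hs.eventuallyLE.trans Ioi_ae_eq_Ici.symm.le)
    _ = 1 / c := by rw [integral_exp_mul_Ioi hc']; simp

section Trace

variable {f f' : ℝ → ℝ} {a b : ℝ}

lemma abs_le_abs_add_setIntegral_abs_deriv (hf : ∀ s ∈ Icc a b, HasDerivAt f (f' s) s)
    (hf' : IntegrableOn f' (Icc a b)) {x t : ℝ} (hx : x ∈ Icc a b) (ht : t ∈ Icc a b) :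
    |f x| ≤ |f t| + ∫ s in Icc a b, |f' s| := by
  have hsub : uIcc t x ⊆ Icc a b := uIcc_subset_Icc ht hx
  have hftc : ∫ s in t..x, f' s = f x - f t :=
    intervalIntegral.integral_eq_sub_of_hasDerivAt (fun s hs => hf s (hsub hs))
      ((hf'.mono_set hsub).intervalIntegrable)
  have hvar : |f x - f t| ≤ ∫ s in Icc a b, |f' s| := by
    rw [← hftc]
    calc |∫ s in t..x, f' s| ≤ ∫ s in uIoc t x, |f' s| := by
          simpa only [Real.norm_eq_abs] using
            intervalIntegral.norm_integral_le_integral_norm_uIoc (f := f') (a := t) (b := x)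
      _ ≤ ∫ s in Icc a b, |f' s| :=
          setIntegral_mono_set hf'.abs (.of_forall fun _ => abs_nonneg _)
            (uIoc_subset_uIcc.trans hsub).eventuallyLE
  linarith [abs_sub_abs_le_abs_sub (f x) (f t)]

lemma mul_abs_le_setIntegral_abs_add (hab : a ≤ b) (hf : ∀ s ∈ Icc a b, HasDerivAt f (f' s) s)
    (hf' : IntegrableOn f' (Icc a b)) {x : ℝ} (hx : x ∈ Icc a b) :
    (b - a) * |f x| ≤ (∫ t in Icc a b, |f t|) + (b - a) * ∫ s in Icc a b, |f' s| := by
  have hfi : IntegrableOn (fun t => |f t|) (Icc a b) :=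
    (HasDerivAt.continuousOn hf).abs.integrableOn_compact isCompact_Icc
  have hconst : IntegrableOn (fun _ => ∫ s in Icc a b, |f' s|) (Icc a b) :=
    integrableOn_const (by simp)
  calc (b - a) * |f x| = ∫ _ in Icc a b, |f x| := by
        rw [setIntegral_const, volume_real_Icc_of_le hab, smul_eq_mul]
    _ ≤ ∫ t in Icc a b, (|f t| + ∫ s in Icc a b, |f' s|) :=
        setIntegral_mono_on (integrableOn_const (by simp)) (hfi.add hconst) measurableSet_Icc
          fun t ht => abs_le_abs_add_setIntegral_abs_deriv hf hf' hx ht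
    _ = (∫ t in Icc a b, |f t|) + (b - a) * ∫ s in Icc a b, |f' s| := by
        rw [integral_add hfi hconst, setIntegral_const, volume_real_Icc_of_le hab, smul_eq_mul]

lemma setIntegral_exp_neg_mul_mul_abs_le {c : ℝ} (hc : 0 < c)
    (hf : ∀ s ∈ Icc 0 1, HasDerivAt f (f' s) s) (hf' : IntegrableOn f' (Icc 0 1)) :
    ∫ s in Icc 0 1, exp (-c * s) * |f s| ≤
      1 / c * ((∫ s in Icc 0 1, |f s|) + ∫ s in Icc 0 1, |f' s|) := by
  set C := (∫ s in Icc (0 : ℝ) 1, |f s|) + ∫ s in Icc 0 1, |f' s|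
  have htrace : ∀ s ∈ Icc (0 : ℝ) 1, |f s| ≤ C := fun s hs => by
    simpa using mul_abs_le_setIntegral_abs_add zero_le_one hf hf' hs
  have hexp : Continuous fun s : ℝ => exp (-c * s) := by fun_prop
  have hC : 0 ≤ C := (abs_nonneg _).trans (htrace 0 (left_mem_Icc.2 zero_le_one))
  calc ∫ s in Icc 0 1, exp (-c * s) * |f s|
      ≤ ∫ s in Icc 0 1, exp (-c * s) * C :=
        setIntegral_mono_on
          ((hexp.continuousOn.mul (HasDerivAt.continuousOn hf).abs).integrableOn_compact
            isCompact_Icc)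
          ((hexp.mul continuous_const).integrableOn_Icc) measurableSet_Icc
          fun s hs => mul_le_mul_of_nonneg_left (htrace s hs) (exp_pos _).le
    _ = (∫ s in Icc 0 1, exp (-c * s)) * C := integral_mul_const _ _
    _ ≤ 1 / c * C :=
        mul_le_mul_of_nonneg_right (setIntegral_exp_neg_mul_le hc Icc_subset_Ici_self) hC

end Trace

lemma MeasureTheory.IntegrableOn.integrableOn_setIntegral_prod {α β : Type*} [MeasurableSpace α]
    [MeasurableSpace β] {μ : Measure α} {ν : Measure β} [SFinite μ] [SFinite ν]
    {f : α × β → ℝ} {s : Set α} {t : Set β} (hf : IntegrableOn f (s ×ˢ t) (μ.prod ν)) :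
    IntegrableOn (fun x => ∫ y in t, f (x, y) ∂ν) s μ := by
  rw [IntegrableOn, ← Measure.prod_restrict] at hf
  exact hf.integral_prod_left

lemma hasDerivAt_pd2 {v : ℝ × ℝ → ℝ} {a b : ℝ} (hv : DifferentiableAt ℝ v (a, b)) :
    HasDerivAt (fun r => v (a, r)) (pd2 v (a, b)) b :=
  hv.hasFDerivAt.comp_hasDerivAt b ((hasDerivAt_const _ _).prodMk (hasDerivAt_id _))

lemma ContDiffOn.continuousOn_pd2 {v : ℝ × ℝ → ℝ} {U : Set (ℝ × ℝ)} (hU : IsOpen U)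
    (hv : ContDiffOn ℝ 1 v U) : ContinuousOn (pd2 v) U :=
  (hv.continuousOn_fderiv_of_isOpen hU le_rfl).clm_apply continuousOn_const

/-- The exponentially weighted `L¹` estimate used in the proof of Theorem 3.7 of
the paper: integrating a trace-type inequality against the exponential weight
`e^{−δx₂/ε}` produces the factor `ε/δ`. -/
theorem weighted_L1_estimate
    (v : ℝ × ℝ → ℝ) (U : Set (ℝ × ℝ)) (hU : IsOpen U)
    (hUc : Set.Icc (0:ℝ) 1 ×ˢ Set.Icc (0:ℝ) 1 ⊆ U)
    (hv : ContDiffOn ℝ 1 v U) (δ ε : ℝ) (hδ : 0 < δ) (hε : 0 < ε) :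
    (∫ x in Set.Icc (0:ℝ) 1 ×ˢ Set.Icc (0:ℝ) 1,
        Real.exp (-δ * x.2 / ε) * |v x|) ≤
      (ε / δ) * ((∫ x in Set.Icc (0:ℝ) 1 ×ˢ Set.Icc (0:ℝ) 1, |v x|) +
        ∫ x in Set.Icc (0:ℝ) 1 ×ˢ Set.Icc (0:ℝ) 1, |pd2 v x|) := by
  have hK : IsCompact (Icc (0:ℝ) 1 ×ˢ Icc (0:ℝ) 1) := isCompact_Icc.prod isCompact_Icc
  have hvK := hv.continuousOn.mono hUc
  have hpK := (hv.continuousOn_pd2 hU).mono hUc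
  have hvI : IntegrableOn (fun x => |v x|) (Icc 0 1 ×ˢ Icc 0 1) :=
    hvK.abs.integrableOn_compact hK
  have hpI : IntegrableOn (fun x => |pd2 v x|) (Icc 0 1 ×ˢ Icc 0 1) :=
    hpK.abs.integrableOn_compact hK
  have hwI : IntegrableOn (fun x : ℝ × ℝ => exp (-δ * x.2 / ε) * |v x|) (Icc 0 1 ×ˢ Icc 0 1) :=
    ((by fun_prop : Continuous fun x : ℝ × ℝ => exp (-δ * x.2 / ε)).continuousOn.mul
      hvK.abs).integrableOn_compact hK
  rw [Measure.volume_eq_prod] at hvI hpI hwI ⊢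
  rw [setIntegral_prod _ hwI, setIntegral_prod _ hvI, setIntegral_prod _ hpI,
    ← integral_add hvI.integrableOn_setIntegral_prod hpI.integrableOn_setIntegral_prod,
    ← integral_const_mul]
  refine setIntegral_mono_on hwI.integrableOn_setIntegral_prod
    ((hvI.integrableOn_setIntegral_prod.add hpI.integrableOn_setIntegral_prod).const_mul _)
    measurableSet_Icc fun x₁ hx₁ => ?_
  have hslice_deriv : ∀ s ∈ Icc (0:ℝ) 1, HasDerivAt (fun r => v (x₁, r)) (pd2 v (x₁, s)) s :=
    fun s hs => hasDerivAt_pd2 ((hv.differentiableOn one_ne_zero).differentiableAt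
      (hU.mem_nhds (hUc ⟨hx₁, hs⟩)))
  have hslice_int : IntegrableOn (fun s => pd2 v (x₁, s)) (Icc 0 1) :=
    (hpK.uncurry_left (f := fun a b => pd2 v (a, b)) x₁ hx₁).integrableOn_compact isCompact_Icc
  have hweight : ∀ s : ℝ, -δ * s / ε = -(δ / ε) * s := fun s => by ring
  simpa only [hweight, one_div_div] using
    setIntegral_exp_neg_mul_mul_abs_le (div_pos hδ hε) hslice_deriv hslice_int
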